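/- Let U_1, …, U_d be pairwise commuting unitary k×k complex matrices, let P be an orthogonal projection on ℂ^k, and let δ ≥ 0 satisfy ‖[P, U_i]‖ ≤ δ for all i. Let T_i be the compression of U_i to range(P), i.e. the map v ↦ P U_i v on range(P). Then ‖T_i T_j − T_j T_i‖ ≤ 2δ² for all i, j. -/

import Mathlib

/-!
Write `C_X = P X - X P`. If `A` and `B` commute and `P² = P`, expanding gives
`(P A P B - P B P A) P = (C_A C_B - C_B C_A) P`. On `range P` the trailing `P` acts as the
identity, so the commutator of the compressions is the restriction of `C_A C_B - C_B C_A`,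
whose norm is at most `2 ‖C_A‖ ‖C_B‖ ≤ 2 δ²`.
-/

/-- The compression of an operator `U` to the range of `P`: the map `v ↦ P (U v)`
on `range P`. -/
noncomputable def compress {E : Type*} [NormedAddCommGroup E] [InnerProductSpace ℂ E]
    (P U : E →L[ℂ] E) : (LinearMap.range (P : E →ₗ[ℂ] E)) →L[ℂ] (LinearMap.range (P : E →ₗ[ℂ] E)) :=
  ((P ∘L U) ∘L (LinearMap.range (P : E →ₗ[ℂ] E)).subtypeL).codRestrict (LinearMap.range (P : E →ₗ[ℂ] E))
    (fun v => LinearMap.mem_range.mpr ⟨U v, rfl⟩)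

theorem IsIdempotentElem.commutator_compressions_mul_eq {R : Type*} [Ring R] {P A B : R}
    (hP : IsIdempotentElem P) (hAB : Commute A B) :
    (P * A * P * B - P * B * P * A) * P =
      ((P * A - A * P) * (P * B - B * P) - (P * B - B * P) * (P * A - A * P)) * P := by
  simp only [sub_mul, mul_sub, mul_assoc, hP.mul_self_mul, hP.eq, hAB.left_comm]
  abel

section Compression

variable {E : Type*} [NormedAddCommGroup E] [InnerProductSpace ℂ E] {P : E →L[ℂ] E}

theorem coe_compress_apply (U : E →L[ℂ] E) (v : LinearMap.range (P : E →ₗ[ℂ] E)) :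
    (compress P U v : E) = P (U v) :=
  rfl

theorem apply_eq_self_of_mem_range (hP : IsIdempotentElem P)
    (v : LinearMap.range (P : E →ₗ[ℂ] E)) : P v = v := by
  obtain ⟨w, hw⟩ := v.2
  rw [← hw]
  exact congr($(hP.eq) w)

theorem coe_compress_commutator_apply (hP : IsIdempotentElem P) {A B : E →L[ℂ] E}
    (hAB : Commute A B) (v : LinearMap.range (P : E →ₗ[ℂ] E)) :
    ((compress P A * compress P B - compress P B * compress P A) v : E) =
      ((P * A - A * P) * (P * B - B * P) - (P * B - B * P) * (P * A - A * P)) v := by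
  have h := congr($(hP.commutator_compressions_mul_eq hAB) (v : E))
  simp only [mul_apply_eq_comp, apply_eq_self_of_mem_range hP] at h
  simpa only [sub_apply, mul_apply_eq_comp, Submodule.coe_sub, coe_compress_apply] using h

theorem norm_compress_commutator_le (hP : IsIdempotentElem P) {A B : E →L[ℂ] E}
    (hAB : Commute A B) :
    ‖compress P A * compress P B - compress P B * compress P A‖ ≤
      2 * (‖P * A - A * P‖ * ‖P * B - B * P‖) := by
  set X := P * A - A * P
  set Y := P * B - B * P
  have hXY : ‖X * Y - Y * X‖ ≤ 2 * (‖X‖ * ‖Y‖) :=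
    calc ‖X * Y - Y * X‖ ≤ ‖X * Y‖ + ‖Y * X‖ := norm_sub_le _ _
      _ ≤ ‖X‖ * ‖Y‖ + ‖Y‖ * ‖X‖ := add_le_add (norm_mul_le _ _) (norm_mul_le _ _)
      _ = 2 * (‖X‖ * ‖Y‖) := by ring
  refine ContinuousLinearMap.opNorm_le_bound _ (by positivity) fun v => ?_
  rw [← Submodule.norm_coe, coe_compress_commutator_apply hP hAB, ← Submodule.norm_coe v]
  exact ((X * Y - Y * X).le_opNorm _).trans (by gcongr)

end Compression

theorem stmt3 {d : ℕ}
    (E : Type*) [NormedAddCommGroup E] [InnerProductSpace ℂ E]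
    (U : Fin d → (E →L[ℂ] E))
    (hUcomm : ∀ i j, U i * U j = U j * U i)
    (P : E →L[ℂ] E) (hPproj : P * P = P)
    (δ : ℝ)
    (hPU : ∀ i, ‖P * U i - U i * P‖ ≤ δ) :
    ∀ i j, ‖compress P (U i) * compress P (U j)
        - compress P (U j) * compress P (U i)‖ ≤ 2 * δ ^ 2 := by
  intro i j
  calc _ ≤ 2 * (‖P * U i - U i * P‖ * ‖P * U j - U j * P‖) :=
        norm_compress_commutator_le hPproj (hUcomm i j)
    _ ≤ 2 * (δ * δ) := by
        gcongr
        exacts [(norm_nonneg _).trans (hPU i), hPU i, hPU j]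
    _ = 2 * δ ^ 2 := by ring
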